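/- Let Λ be the free ℤ-module with basis E_1, …, E_N and bilinear form E_a · E_b = −δ_{ab}. For i ∈ {1,…,n} let J_i ⊆ {1,…,N} with min J_i > i and e_i = E_i − Σ_{j ∈ J_i} E_j. Assume e_a · e_b ≥ 0 for all a ≠ b. Then every index q has at most two 'direct ascendents', i.e. |{ p : q ∈ J_p }| ≤ 2; moreover if q ∈ J_{p_1} ∩ J_{p_2} with p_1 < p_2, then p_2 ∈ J_{p_1}. -/
import Mathlib


/-- The basis vector `E i` of the free ℤ-module on `Fin N`. -/
def Ebasis (N : ℕ) (i : Fin N) : Fin N → ℤ := Pi.single i 1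

/-- The symmetric bilinear form determined by `E a · E b = -δ_{ab}`. -/
def Bform {N : ℕ} (x y : Fin N → ℤ) : ℤ := -(∑ c, x c * y c)

/-- The type I exceptional class `e i = E i - ∑_{j ∈ J i} E j`. -/
def eclass {N : ℕ} (J : Fin N → Finset (Fin N)) (i : Fin N) : Fin N → ℤ :=
  Ebasis N i - ∑ j ∈ J i, Ebasis N j

lemma eclass_apply {N : ℕ} (J : Fin N → Finset (Fin N)) (i c : Fin N) :
    eclass J i c = (if c = i then 1 else 0) - (if c ∈ J i then 1 else 0) := by
  simp [eclass, Ebasis, Pi.single_apply, Finset.sum_apply, Finset.sum_ite_eq]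

lemma Bform_eclass {N : ℕ} (J : Fin N → Finset (Fin N)) (a b : Fin N) :
    Bform (eclass J a) (eclass J b) =
      -((if a = b then (1:ℤ) else 0) - (if a ∈ J b then 1 else 0)
        - (if b ∈ J a then 1 else 0) + ((J a ∩ J b).card : ℤ)) := by
  unfold Bform
  congr 1
  simp only [eclass_apply, sub_mul, mul_sub]
  rw [Finset.sum_sub_distrib, Finset.sum_sub_distrib, Finset.sum_sub_distrib]
  have h1 : ∑ c, (if c = a then (1:ℤ) else 0) * (if c = b then 1 else 0)
      = if a = b then 1 else 0 := by
    simp [ite_zero_mul, Finset.sum_ite_eq, eq_comm]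
  have h2 : ∑ c, (if c = a then (1:ℤ) else 0) * (if c ∈ J b then 1 else 0)
      = if a ∈ J b then 1 else 0 := by
    simp [ite_zero_mul, Finset.sum_ite_eq]
  have h3 : ∑ c, (if c ∈ J a then (1:ℤ) else 0) * (if c = b then 1 else 0)
      = if b ∈ J a then 1 else 0 := by
    simp [mul_ite, Finset.sum_ite_eq]
  have h4 : ∑ c, (if c ∈ J a then (1:ℤ) else 0) * (if c ∈ J b then 1 else 0)
      = ((J a ∩ J b).card : ℤ) := by
    have e : ∀ c, (if c ∈ J a then (1:ℤ) else 0) * (if c ∈ J b then 1 else 0)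
        = if c ∈ J a ∩ J b then 1 else 0 := by
      intro c; simp only [Finset.mem_inter]; split_ifs <;> simp_all
    simp_rw [e]
    rw [Finset.sum_ite_mem]
    simp
  rw [h1, h2, h3, h4]
  ring

lemma key {N : ℕ} (J : Fin N → Finset (Fin N)) (hdesc : ∀ i, ∀ j ∈ J i, i < j)
    (hpos : ∀ a b, a ≠ b → 0 ≤ Bform (eclass J a) (eclass J b)) {a b : Fin N}
    (hab : a < b) : ((J a ∩ J b).card : ℤ) ≤ if b ∈ J a then 1 else 0 := by
  have h := hpos a b hab.ne
  rw [Bform_eclass] at h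
  have hab' : a ∉ J b := fun hm => absurd (hdesc b a hm) (not_lt.2 hab.le)
  simp only [hab.ne, if_neg hab', if_neg, ite_false] at h
  omega

/-- If `min J_i > i` for all `i` and all pairwise intersections `e_a · e_b` (`a ≠ b`)
are nonnegative, then every index `q` has at most two direct ascendents, and if
`q ∈ J_{p₁} ∩ J_{p₂}` with `p₁ < p₂` then `p₂ ∈ J_{p₁}`. -/
theorem stmt4 {N : ℕ} (J : Fin N → Finset (Fin N)) (hdesc : ∀ i, ∀ j ∈ J i, i < j)
    (hpos : ∀ a b, a ≠ b → 0 ≤ Bform (eclass J a) (eclass J b)) (q : Fin N) :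
    (Finset.univ.filter (fun p => q ∈ J p)).card ≤ 2 ∧
      ∀ p₁ p₂, p₁ < p₂ → q ∈ J p₁ → q ∈ J p₂ → p₂ ∈ J p₁ := by
  have part2 : ∀ p₁ p₂, p₁ < p₂ → q ∈ J p₁ → q ∈ J p₂ → p₂ ∈ J p₁ := by
    intro p₁ p₂ h12 h1 h2
    have hk := key J hdesc hpos h12
    by_contra hmem
    rw [if_neg hmem] at hk
    have : 0 < (J p₁ ∩ J p₂).card :=
      Finset.card_pos.2 ⟨q, Finset.mem_inter.2 ⟨h1, h2⟩⟩
    omega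
  refine ⟨?_, part2⟩
  by_contra hcard
  push_neg at hcard
  obtain ⟨a, b, c, ha, hb, hc, hab, hac, hbc⟩ := Finset.two_lt_card_iff.1 hcard
  simp only [Finset.mem_filter] at ha hb hc
  -- reduce to sorted triple
  have no3 : ∀ p₁ p₂ p₃ : Fin N, p₁ < p₂ → p₂ < p₃ →
      q ∈ J p₁ → q ∈ J p₂ → q ∈ J p₃ → False := by
    intro p₁ p₂ p₃ h12 h23 h1 h2 h3
    have m21 : p₂ ∈ J p₁ := part2 _ _ h12 h1 h2
    have m31 : p₃ ∈ J p₁ := part2 _ _ (h12.trans h23) h1 h3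
    have m32 : p₃ ∈ J p₂ := part2 _ _ h23 h2 h3
    have hk := key J hdesc hpos h12
    rw [if_pos m21] at hk
    have hq3 : q ≠ p₃ := fun h => absurd (hdesc p₃ q h3) (by simp [h])
    have : 1 < (J p₁ ∩ J p₂).card :=
      Finset.one_lt_card.2 ⟨q, Finset.mem_inter.2 ⟨h1, h2⟩,
        p₃, Finset.mem_inter.2 ⟨m31, m32⟩, hq3⟩
    omega
  rcases lt_trichotomy a b with h | h | h
  · rcases lt_trichotomy b c with h' | h' | h'
    · exact no3 a b c h h' ha.2 hb.2 hc.2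
    · exact hbc h'
    · rcases lt_trichotomy a c with h'' | h'' | h''
      · exact no3 a c b h'' h' ha.2 hc.2 hb.2
      · exact hac h''
      · exact no3 c a b h'' h hc.2 ha.2 hb.2
  · exact hab h
  · rcases lt_trichotomy a c with h' | h' | h'
    · exact no3 b a c h h' hb.2 ha.2 hc.2
    · exact hac h'
    · rcases lt_trichotomy b c with h'' | h'' | h''
      · exact no3 b c a h'' h' hb.2 hc.2 ha.2
      · exact hbc h''
      · exact no3 c b a h'' h hc.2 hb.2 ha.2
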